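/- Let J be a jellyfish graph with head H and legs isomorphic to the rooted tree L. A set S ⊆ V(J) is a fixing set of J if and only if (i) for every head vertex v, S ∩ V(L_v) is a fixing set of the rooted tree L_v, and (ii) the projection S_proj = { v ∈ V(H) : S ∩ V(L_v) ≠ ∅ } is a fixing set of H. -/

import Mathlib

open SimpleGraph

/-- `φ` is a distinguishing labeling of `G`: the only automorphism preserving `φ` is the identity. -/
def IsDist {V α : Type*} (G : SimpleGraph V) (φ : V → α) : Prop :=
  ∀ π : G ≃g G, (∀ v, φ (π v) = φ v) → ∀ v, π v = v

/-- The distinguishing number `D(G)`. -/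
noncomputable def distNum {V : Type*} (G : SimpleGraph V) : ℕ :=
  sInf {c : ℕ | ∃ φ : V → Fin c, IsDist G φ}

/-- `S` is a fixing set of `G`. -/
def IsFixingSet {V : Type*} (G : SimpleGraph V) (S : Set V) : Prop :=
  ∀ π : G ≃g G, (∀ v ∈ S, π v = v) → ∀ v, π v = v

/-- The fixing number `Fix(G)`. -/
noncomputable def fixNum {V : Type*} (G : SimpleGraph V) : ℕ :=
  sInf {n : ℕ | ∃ S : Set V, S.ncard = n ∧ IsFixingSet G S}

/-- `D(G, c)`: the number of pairwise inequivalent distinguishing labelings of `G`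
using at most `c` colors. -/
noncomputable def countDist {V : Type*} (G : SimpleGraph V) (c : ℕ) : ℕ :=
  Nat.card (Quot (fun φ ψ : {φ : V → Fin c // IsDist G φ} =>
    ∃ π : G ≃g G, ∀ v, φ.1 v = ψ.1 (π v)))

/-- The disjoint union of `r` copies of `G`. -/
def copies {V : Type*} (r : ℕ) (G : SimpleGraph V) : SimpleGraph (Fin r × V) where
  Adj x y := x.1 = y.1 ∧ G.Adj x.2 y.2
  symm := by
    refine ⟨?_⟩
    rintro ⟨i, u⟩ ⟨j, v⟩ ⟨h1, h2⟩
    exact ⟨h1.symm, h2.symm⟩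
  loopless := by
    refine ⟨?_⟩
    rintro ⟨i, u⟩ ⟨-, h⟩
    exact G.loopless.irrefl u h

/-- A distinguishing labeling of the graph `G` rooted at `r`:
the only root-preserving automorphism preserving `φ` is the identity. -/
def IsRDist {V α : Type*} (G : SimpleGraph V) (r : V) (φ : V → α) : Prop :=
  ∀ π : G ≃g G, π r = r → (∀ v, φ (π v) = φ v) → ∀ v, π v = v

/-- The distinguishing number of the graph `G` rooted at `r`. -/
noncomputable def rdistNum {V : Type*} (G : SimpleGraph V) (r : V) : ℕ :=
  sInf {c : ℕ | ∃ φ : V → Fin c, IsRDist G r φ}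

/-- The number of pairwise inequivalent (under root-preserving automorphisms)
distinguishing labelings of the rooted graph `(G, r)` using at most `c` colors. -/
noncomputable def rcountDist {V : Type*} (G : SimpleGraph V) (r : V) (c : ℕ) : ℕ :=
  Nat.card (Quot (fun φ ψ : {φ : V → Fin c // IsRDist G r φ} =>
    ∃ π : G ≃g G, π r = r ∧ ∀ v, φ.1 v = ψ.1 (π v)))

/-- `S` is a fixing set of the graph `G` rooted at `r` (w.r.t. root-preserving automorphisms). -/
def IsRFix {V : Type*} (G : SimpleGraph V) (r : V) (S : Set V) : Prop :=
  ∀ π : G ≃g G, π r = r → (∀ v ∈ S, π v = v) → ∀ v, π v = v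

/-- The fixing number of the graph `G` rooted at `r`. -/
noncomputable def rfixNum {V : Type*} (G : SimpleGraph V) (r : V) : ℕ :=
  sInf {n : ℕ | ∃ S : Set V, S.ncard = n ∧ IsRFix G r S}

/-- A rooted isomorphism between `(G, r)` and `(H, s)`. -/
def RootedIso {V W : Type*} (G : SimpleGraph V) (r : V) (H : SimpleGraph W) (s : W) : Prop :=
  ∃ e : G ≃g H, e r = s

/-- The jellyfish graph with head `H` and a copy of the rooted tree `(L, ρ)` attached
(by its root) at each vertex of `H`.  The leg at `a` is `{a} × B`, attached at `(a, ρ)`. -/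
def jellyfish {A B : Type*} (H : SimpleGraph A) (L : SimpleGraph B) (ρ : B) :
    SimpleGraph (A × B) where
  Adj x y := (x.2 = ρ ∧ y.2 = ρ ∧ H.Adj x.1 y.1) ∨ (x.1 = y.1 ∧ L.Adj x.2 y.2)
  symm := by
    refine ⟨?_⟩
    rintro ⟨a, b⟩ ⟨a', b'⟩ (⟨h1, h2, h3⟩ | ⟨h1, h2⟩)
    · exact Or.inl ⟨h2, h1, h3.symm⟩
    · exact Or.inr ⟨h1.symm, h2.symm⟩
  loopless := by
    refine ⟨?_⟩
    rintro ⟨a, b⟩ (⟨-, -, h⟩ | ⟨-, h⟩)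
    · exact H.loopless.irrefl a h
    · exact L.loopless.irrefl b h

/-!
The head vertices `(a, ρ)` are exactly the vertices of the jellyfish graph that lie on a cycle:
the Hamiltonian cycle of `H` passes through each of them, whereas every leg edge is a bridge
because `L` is a tree. Hence automorphisms permute the head vertices, and, `L` being connected,
carry legs onto legs. So the automorphisms are exactly the maps `(a, b) ↦ (τ a, σ a b)` with
`τ ∈ Aut H` and each `σ a` a root-fixing automorphism of `L`. A fixing set has to pin down `τ`,
which only sees the legs that `S` meets, and each `σ a`, which only sees `S` inside the leg at `a`.
-/

theorem SimpleGraph.Reachable.map_of_adj {V W : Type*} {G : SimpleGraph V} {G' : SimpleGraph W}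
    (f : V → W) (hf : ∀ ⦃u v⦄, G.Adj u v → f u = f v ∨ G'.Adj (f u) (f v)) {u v : V}
    (h : G.Reachable u v) : G'.Reachable (f u) (f v) := by
  rw [reachable_iff_reflTransGen] at h ⊢
  refine h.lift' f fun x y hxy => ?_
  rcases hf hxy with heq | hadj
  · simp only [Function.onFun, heq, Relation.ReflTransGen.refl]
  · exact Relation.ReflTransGen.single hadj

section Jellyfish

variable {A B : Type*} {H : SimpleGraph A} {L : SimpleGraph B} {ρ : B}

theorem jellyfish_adj_root_iff {a a' : A} :
    (jellyfish H L ρ).Adj (a, ρ) (a', ρ) ↔ H.Adj a a' := by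
  simp [jellyfish]

theorem jellyfish_adj_leg_iff {a : A} {b b' : B} :
    (jellyfish H L ρ).Adj (a, b) (a, b') ↔ L.Adj b b' := by
  simp [jellyfish]

theorem jellyfish_adj_of_snd_ne {x y : A × B} (hx : x.2 ≠ ρ) (h : (jellyfish H L ρ).Adj x y) :
    y.1 = x.1 ∧ L.Adj x.2 y.2 := by
  rcases h with ⟨h, -, -⟩ | ⟨h₁, h₂⟩
  · exact absurd h hx
  · exact ⟨h₁.symm, h₂⟩

variable (H L ρ) in
def jellyfishRootEmbedding : H ↪g jellyfish H L ρ where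
  toFun a := (a, ρ)
  inj' _ _ h := congrArg Prod.fst h
  map_rel_iff' := jellyfish_adj_root_iff

theorem isBridge_jellyfish_leg {b b' : B} (h : L.IsBridge s(b, b')) (a : A) :
    (jellyfish H L ρ).IsBridge s((a, b), (a, b')) := by
  classical
  rw [isBridge_iff] at h ⊢
  intro hreach
  -- collapse everything outside the leg at `a` onto the root of `L`
  have key := hreach.map_of_adj (G' := L.deleteEdges {s(b, b')})
    (fun x => if x.1 = a then x.2 else ρ) ?_
  · exact h (by simpa using key)
  rintro ⟨c, d⟩ ⟨c', d'⟩ ⟨hadj, hne⟩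
  rcases hadj with ⟨rfl, rfl, -⟩ | ⟨rfl, hL⟩
  · left; simp
  by_cases hc : c = a
  · subst hc
    refine .inr ⟨by simpa using hL, fun he => hne ?_⟩
    simp only [fromEdgeSet_adj, Set.mem_singleton_iff, Sym2.eq_iff, Prod.mk.injEq, ne_eq] at he ⊢
    tauto
  · left; simp [hc]

theorem snd_eq_of_isCycle_jellyfish (hL : L.IsAcyclic) {x : A × B}
    {c : (jellyfish H L ρ).Walk x x} (hc : c.IsCycle) : x.2 = ρ := by
  by_contra hx
  cases c with
  | nil => exact hc.not_nil .nil
  | @cons _ v _ hadj p =>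
    obtain ⟨hfst, hleg⟩ := jellyfish_adj_of_snd_ne hx hadj
    have hbridge := isBridge_jellyfish_leg (H := H) (ρ := ρ)
      (isAcyclic_iff_forall_adj_isBridge.mp hL hleg) x.1
    rw [Prod.mk.eta, ← hfst, Prod.mk.eta] at hbridge
    exact hbridge.notMem_edges_of_isCycle hc (by simp)

theorem exists_isCycle_jellyfish_root [DecidableEq A]
    (hH : ∃ (a : A) (p : H.Walk a a), p.IsHamiltonianCycle) (a : A) :
    ∃ c : (jellyfish H L ρ).Walk (a, ρ) (a, ρ), c.IsCycle := by
  classical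
  obtain ⟨a₀, p, hp⟩ := hH
  let ι := jellyfishRootEmbedding H L ρ
  have hcycle : (p.map ι.toHom).IsCycle := hp.isCycle.map ι.injective
  have hmem : (a, ρ) ∈ (p.map ι.toHom).support := by
    simpa [Walk.support_map] using ⟨a, hp.mem_support a, rfl⟩
  exact ⟨_, hcycle.rotate hmem⟩

theorem jellyfish_iso_apply_root_snd [DecidableEq A]
    (hH : ∃ (a : A) (p : H.Walk a a), p.IsHamiltonianCycle) (hL : L.IsAcyclic)
    (π : jellyfish H L ρ ≃g jellyfish H L ρ) (a : A) : (π (a, ρ)).2 = ρ := by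
  obtain ⟨c, hc⟩ := exists_isCycle_jellyfish_root (L := L) hH a
  exact snd_eq_of_isCycle_jellyfish hL (hc.map (f := π.toHom) π.injective)

theorem jellyfish_iso_apply_snd_eq_root_iff [DecidableEq A]
    (hH : ∃ (a : A) (p : H.Walk a a), p.IsHamiltonianCycle) (hL : L.IsAcyclic)
    (π : jellyfish H L ρ ≃g jellyfish H L ρ) {x : A × B} : (π x).2 = ρ ↔ x.2 = ρ := by
  constructor
  · intro h
    have hx : π x = ((π x).1, ρ) := Prod.ext rfl h
    have := jellyfish_iso_apply_root_snd hH hL π.symm (π x).1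
    rwa [← hx, RelIso.symm_apply_apply] at this
  · obtain ⟨a, b⟩ := x
    rintro (rfl : b = ρ)
    exact jellyfish_iso_apply_root_snd hH hL π a

theorem jellyfish_iso_apply_fst_eq [DecidableEq A]
    (hH : ∃ (a : A) (p : H.Walk a a), p.IsHamiltonianCycle) (hL : L.IsTree)
    (π : jellyfish H L ρ ≃g jellyfish H L ρ) (a : A) (b : B) :
    (π (a, b)).1 = (π (a, ρ)).1 := by
  refine reachable_bot.mp ((hL.connected.preconnected b ρ).map_of_adj
    (fun c => (π (a, c)).1) fun c c' hcc' => .inl ?_)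
  rcases π.map_adj_iff.mpr (jellyfish_adj_leg_iff (a := a) |>.mpr hcc') with ⟨h, h', -⟩ | ⟨h, -⟩
  · rw [jellyfish_iso_apply_snd_eq_root_iff hH hL.isAcyclic] at h h'
    obtain ⟨rfl, rfl⟩ : c = ρ ∧ c' = ρ := ⟨h, h'⟩
    exact absurd hcc' (L.loopless.irrefl _)
  · exact h

variable (ρ) in
def jellyfishAut (τ : H ≃g H) (σ : A → L ≃g L) (hσ : ∀ a, σ a ρ = ρ) :
    jellyfish H L ρ ≃g jellyfish H L ρ where
  toFun x := (τ x.1, σ x.1 x.2)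
  invFun x := (τ.symm x.1, (σ (τ.symm x.1)).symm x.2)
  left_inv := by rintro ⟨a, b⟩; simp
  right_inv := by rintro ⟨a, b⟩; simp
  map_rel_iff' := by
    rintro ⟨a, b⟩ ⟨a', b'⟩
    have hroot : ∀ a b, σ a b = ρ ↔ b = ρ := fun a b => (σ a).injective.eq_iff' (hσ a)
    simp only [jellyfish, Equiv.coe_fn_mk, hroot, τ.injective.eq_iff, τ.map_adj_iff]
    constructor
    · rintro (h | ⟨rfl, h⟩)
      · exact .inl h
      · exact .inr ⟨rfl, (σ a).map_adj_iff.mp h⟩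
    · rintro (h | ⟨rfl, h⟩)
      · exact .inl h
      · exact .inr ⟨rfl, (σ a).map_adj_iff.mpr h⟩

@[simp]
theorem jellyfishAut_apply (τ : H ≃g H) (σ : A → L ≃g L) (hσ : ∀ a, σ a ρ = ρ) (x : A × B) :
    jellyfishAut ρ τ σ hσ x = (τ x.1, σ x.1 x.2) := rfl

theorem exists_jellyfishAut_eq [DecidableEq A]
    (hH : ∃ (a : A) (p : H.Walk a a), p.IsHamiltonianCycle) (hL : L.IsTree)
    (π : jellyfish H L ρ ≃g jellyfish H L ρ) :
    ∃ τ σ hσ, π = jellyfishAut ρ τ σ hσ := by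
  have hroot (π : jellyfish H L ρ ≃g jellyfish H L ρ) (a : A) : π (a, ρ) = ((π (a, ρ)).1, ρ) :=
    Prod.ext rfl (jellyfish_iso_apply_root_snd hH hL.isAcyclic π a)
  have hleg (π : jellyfish H L ρ ≃g jellyfish H L ρ) (a : A) (b : B) :
      π (a, b) = ((π (a, ρ)).1, (π (a, b)).2) :=
    Prod.ext (jellyfish_iso_apply_fst_eq hH hL π a b) rfl
  let τ : H ≃g H :=
    { toFun a := (π (a, ρ)).1
      invFun a := (π.symm (a, ρ)).1
      left_inv a := by simp only; rw [← hroot, RelIso.symm_apply_apply]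
      right_inv a := by simp only; rw [← hroot π.symm, RelIso.apply_symm_apply]
      map_rel_iff' {a a'} := by
        simp only [Equiv.coe_fn_mk]
        rw [← jellyfish_adj_root_iff (L := L) (ρ := ρ), ← hroot, ← hroot, π.map_adj_iff,
          jellyfish_adj_root_iff] }
  let σ (a : A) : L ≃g L :=
    { toFun b := (π (a, b)).2
      invFun b := (π.symm (τ a, b)).2
      left_inv b := by
        show (π.symm ((π (a, ρ)).1, (π (a, b)).2)).2 = b
        rw [← hleg, RelIso.symm_apply_apply]
      right_inv b := by
        have hfst : (a, (π.symm (τ a, b)).2) = π.symm (τ a, b) :=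
          Prod.ext ((jellyfish_iso_apply_fst_eq hH hL π.symm _ _).trans
            (τ.symm_apply_apply a)).symm rfl
        show (π (a, (π.symm (τ a, b)).2)).2 = b
        rw [hfst, RelIso.apply_symm_apply]
      map_rel_iff' {b b'} := by
        simp only [Equiv.coe_fn_mk]
        rw [← jellyfish_adj_leg_iff (H := H) (a := (π (a, ρ)).1), ← hleg, ← hleg, π.map_adj_iff,
          jellyfish_adj_leg_iff] }
  refine ⟨τ, σ, fun a => jellyfish_iso_apply_root_snd hH hL.isAcyclic π a, ?_⟩
  ext ⟨a, b⟩ : 1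
  exact hleg π a b

theorem IsFixingSet.isRFix_jellyfish_leg {S : Set (A × B)}
    (hS : IsFixingSet (jellyfish H L ρ) S) (a : A) : IsRFix L ρ {b | (a, b) ∈ S} := by
  classical
  intro σ₀ hσ₀ hfix b
  let σ : A → L ≃g L := Function.update (fun _ => Iso.refl) a σ₀
  have hσ (a' : A) : σ a' ρ = ρ := by
    by_cases ha : a' = a
    · subst ha; simpa [σ] using hσ₀
    · simp [σ, ha]
  have hfixS : ∀ x ∈ S, jellyfishAut ρ (Iso.refl : H ≃g H) σ hσ x = x := by
    rintro ⟨a', b'⟩ hx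
    by_cases ha : a' = a
    · subst ha; simpa [σ] using hfix b' hx
    · simp [σ, ha]
  simpa [σ] using hS _ hfixS (a, b)

theorem IsFixingSet.isFixingSet_jellyfish_head {S : Set (A × B)}
    (hS : IsFixingSet (jellyfish H L ρ) S) : IsFixingSet H {a | ∃ b, (a, b) ∈ S} := by
  intro τ hfix a
  have hfixS : ∀ x ∈ S,
      jellyfishAut ρ τ (fun _ => (Iso.refl : L ≃g L)) (fun _ => RelIso.refl_apply _ _) x = x := by
    rintro ⟨a', b'⟩ hx
    simp [hfix a' ⟨b', hx⟩]
  exact congrArg Prod.fst (hS _ hfixS (a, ρ))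

end Jellyfish

theorem fixingSet_jellyfish_iff_general {A B : Type*} [DecidableEq A]
    (H : SimpleGraph A) (L : SimpleGraph B) (ρ : B)
    (hH : ∃ (a : A) (p : H.Walk a a), p.IsHamiltonianCycle) (hL : L.IsTree)
    (S : Set (A × B)) :
    IsFixingSet (jellyfish H L ρ) S ↔
      ((∀ a : A, IsRFix L ρ {b : B | (a, b) ∈ S}) ∧
       IsFixingSet H {a : A | ∃ b : B, (a, b) ∈ S}) := by
  refine ⟨fun hS => ⟨hS.isRFix_jellyfish_leg, hS.isFixingSet_jellyfish_head⟩, ?_⟩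
  rintro ⟨hlegs, hhead⟩ π hπ
  obtain ⟨τ, σ, hσ, rfl⟩ := exists_jellyfishAut_eq hH hL π
  have hτ : ∀ a, τ a = a := hhead τ fun a ⟨b, hab⟩ => congrArg Prod.fst (hπ _ hab)
  have hσ' : ∀ a b, σ a b = b := fun a =>
    hlegs a (σ a) (hσ a) fun b hb => congrArg Prod.snd (hπ _ hb)
  rintro ⟨a, b⟩
  simp [hτ, hσ']

/-- A set `S` of vertices of a jellyfish graph `J` is a fixing set iff (i) its intersection
with each leg is a fixing set of that rooted leg, and (ii) its projection
`{v ∈ V(H) : S ∩ V(L_v) ≠ ∅}` is a fixing set of the head `H`. -/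
theorem fixingSet_jellyfish_iff {A B : Type*} [Fintype A] [DecidableEq A] [Fintype B]
    (H : SimpleGraph A) (L : SimpleGraph B) (ρ : B)
    (hH : ∃ (a : A) (p : H.Walk a a), p.IsHamiltonianCycle) (hL : L.IsTree)
    (S : Set (A × B)) :
    IsFixingSet (jellyfish H L ρ) S ↔
      ((∀ a : A, IsRFix L ρ {b : B | (a, b) ∈ S}) ∧
       IsFixingSet H {a : A | ∃ b : B, (a, b) ∈ S}) :=
  fixingSet_jellyfish_iff_general H L ρ hH hL S
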